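/- arXiv:2406.02967 — 2 statements merged into one kernel-verified Lean document; each statement's English description precedes it below -/
import Mathlib

section
/- Let (A, B, H) be a P-module with H finite-dimensional, and suppose there exists a unit vector ξ ∈ H and a ray p with lim_{n→∞} ‖pₙξ‖ = ℓ > 0. Then there exists a nonzero vector η ∈ H with ‖η‖ = ℓ and a ray p̂ such that ‖p̂ₙη‖ = ‖η‖ for all n ≥ 1. -/
/-!
The vectors `pₙξ` stay in the ball of radius `‖ξ‖`, so along a subsequence `n = φ k` they converge
to some `η`, and by compactness of Cantor space the tails of `p` after position `φ k` converge,
along a further subsequence, to a ray `p̂`. Then `‖η‖ = ℓ`. For a fixed `n`, the prefix `p̂ₙ` agrees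
with the length-`n` word of `p` starting at `φ k` for all late `k`, so `p̂ₙη` is a limit of vectors
`p_{φ k + n}ξ`, all of norm `≥ ℓ`. Since words are contractions, `‖p̂ₙη‖ = ℓ`.
-/

open Filter Topology
open scoped InnerProductSpace

/-- Action of a finite binary word on a vector: digit `false` acts by `A`,
digit `true` by `B`, with the first digit acting first. -/
noncomputable def wordAct {H : Type*} [NormedAddCommGroup H] [InnerProductSpace ℂ H]
    (A B : H →L[ℂ] H) : List Bool → H → H
  | [], ξ => ξ
  | b :: rest, ξ => wordAct A B rest ((if b then B else A) ξ)

/-- The length-`n` prefix of a ray `p : ℕ → Bool` as a list. -/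
def pre (p : ℕ → Bool) (n : ℕ) : List Bool := List.ofFn fun i : Fin n => p i

/-- The Pythagorean equality `A*A + B*B = id`. -/
def IsPyth {H : Type*} [NormedAddCommGroup H] [InnerProductSpace ℂ H] [CompleteSpace H]
    (A B : H →L[ℂ] H) : Prop :=
  (ContinuousLinearMap.adjoint A).comp A + (ContinuousLinearMap.adjoint B).comp B =
    ContinuousLinearMap.id ℂ H

/-- `ξ` is a nonzero vector contained in the ray `p`. -/
noncomputable def ContainedIn {H : Type*} [NormedAddCommGroup H] [InnerProductSpace ℂ H]
    (A B : H →L[ℂ] H) (p : ℕ → Bool) (ξ : H) : Prop :=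
  ξ ≠ 0 ∧ ∀ n : ℕ, ‖wordAct A B (pre p n) ξ‖ = ‖ξ‖

section Words

variable {H : Type*} [NormedAddCommGroup H] [InnerProductSpace ℂ H]

lemma wordAct_append (A B : H →L[ℂ] H) (u v : List Bool) (ξ : H) :
    wordAct A B (u ++ v) ξ = wordAct A B v (wordAct A B u ξ) := by
  induction u generalizing ξ with
  | nil => rfl
  | cons b rest ih => simp [wordAct, ih]

lemma continuous_wordAct (A B : H →L[ℂ] H) (w : List Bool) :
    Continuous (wordAct A B w) := by
  induction w with
  | nil => exact continuous_id
  | cons b rest ih => exact ih.comp (if b then B else A).continuous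

lemma pre_add (p : ℕ → Bool) (m n : ℕ) :
    pre p (m + n) = pre p m ++ pre (fun i => p (m + i)) n := by
  simp [pre, List.ofFn_add]

lemma eventually_pre_eq_of_tendsto {ι : Type*} {l : Filter ι} {q : ι → ℕ → Bool}
    {p : ℕ → Bool} (hq : Tendsto q l (𝓝 p)) (n : ℕ) :
    ∀ᶠ x in l, pre (q x) n = pre p n := by
  have hcoord : ∀ i : Fin n, ∀ᶠ x in l, q x i = p i := fun i =>
    tendsto_pi_nhds.1 hq i (isOpen_discrete {p i} |>.mem_nhds rfl)
  filter_upwards [eventually_all.2 hcoord] with x hx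
  exact congrArg List.ofFn (funext hx)

lemma le_norm_wordAct_pre_of_tendsto {ι : Type*} {l : Filter ι} [l.NeBot]
    {A B : H →L[ℂ] H} {p phat : ℕ → Bool} {ξ η : H} {ℓ : ℝ} {φ : ι → ℕ}
    (hge : ∀ m, ℓ ≤ ‖wordAct A B (pre p m) ξ‖)
    (hη : Tendsto (fun k => wordAct A B (pre p (φ k)) ξ) l (𝓝 η))
    (hphat : Tendsto (fun k i => p (φ k + i)) l (𝓝 phat)) (n : ℕ) :
    ℓ ≤ ‖wordAct A B (pre phat n) η‖ := by
  have hlim := (((continuous_wordAct A B (pre phat n)).tendsto η).comp hη).norm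
  refine ge_of_tendsto hlim ?_
  filter_upwards [eventually_pre_eq_of_tendsto hphat n] with k hk
  simp only [Function.comp_apply, ← hk, ← wordAct_append, ← pre_add]
  exact hge _

end Words

namespace IsPyth

variable {H : Type*} [NormedAddCommGroup H] [InnerProductSpace ℂ H] [CompleteSpace H]
  {A B : H →L[ℂ] H}

lemma norm_sq_add_norm_sq (h : IsPyth A B) (x : H) : ‖A x‖ ^ 2 + ‖B x‖ ^ 2 = ‖x‖ ^ 2 := by
  rw [ContinuousLinearMap.apply_norm_sq_eq_inner_adjoint_left,
    ContinuousLinearMap.apply_norm_sq_eq_inner_adjoint_left, ← map_add, ← inner_add_left,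
    ← add_apply, h, ContinuousLinearMap.id_apply, inner_self_eq_norm_sq]

lemma norm_apply_le (h : IsPyth A B) (b : Bool) (x : H) :
    ‖(if b then B else A) x‖ ≤ ‖x‖ := by
  have hsum := h.norm_sq_add_norm_sq x
  refine (pow_le_pow_iff_left₀ (norm_nonneg _) (norm_nonneg x) two_ne_zero).1 ?_
  cases b
  · simpa using hsum.le.trans' (le_add_of_nonneg_right (sq_nonneg ‖B x‖))
  · simpa using hsum.le.trans' (le_add_of_nonneg_left (sq_nonneg ‖A x‖))

lemma norm_wordAct_le (h : IsPyth A B) (w : List Bool) (x : H) :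
    ‖wordAct A B w x‖ ≤ ‖x‖ := by
  induction w generalizing x with
  | nil => exact le_rfl
  | cons b rest ih => exact (ih _).trans (h.norm_apply_le b x)

lemma antitone_norm_wordAct_pre (h : IsPyth A B) (p : ℕ → Bool) (ξ : H) :
    Antitone fun n => ‖wordAct A B (pre p n) ξ‖ :=
  antitone_nat_of_succ_le fun n => by
    rw [pre_add, wordAct_append]
    exact h.norm_wordAct_le _ _

end IsPyth

theorem stmt7_general {H : Type*} [NormedAddCommGroup H] [InnerProductSpace ℂ H]
    [FiniteDimensional ℂ H] (A B : H →L[ℂ] H) (hAB : IsPyth A B)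
    (ξ : H) (p : ℕ → Bool) (ℓ : ℝ)
    (hlim : Tendsto (fun n : ℕ => ‖wordAct A B (pre p n) ξ‖) atTop (𝓝 ℓ)) :
    ∃ (η : H) (phat : ℕ → Bool), ‖η‖ = ℓ ∧
      ∀ n : ℕ, ‖wordAct A B (pre phat n) η‖ = ‖η‖ := by
  have hge : ∀ n, ℓ ≤ ‖wordAct A B (pre p n) ξ‖ :=
    (hAB.antitone_norm_wordAct_pre p ξ).le_of_tendsto hlim
  obtain ⟨η, -, φ, hφ, hφη⟩ := (isCompact_closedBall (0 : H) ‖ξ‖).tendsto_subseq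
    fun n => mem_closedBall_zero_iff.2 (hAB.norm_wordAct_le (pre p n) ξ)
  obtain ⟨phat, ψ, hψ, hψphat⟩ := CompactSpace.tendsto_subseq fun k i => p (φ k + i)
  have hη : ‖η‖ = ℓ := tendsto_nhds_unique hφη.norm (hlim.comp hφ.tendsto_atTop)
  refine ⟨η, phat, hη, fun n => le_antisymm (hAB.norm_wordAct_le _ _) ?_⟩
  exact hη ▸ le_norm_wordAct_pre_of_tendsto hge (hφη.comp hψ.tendsto_atTop) hψphat n

theorem stmt7 {H : Type*} [NormedAddCommGroup H] [InnerProductSpace ℂ H]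
    [FiniteDimensional ℂ H] (A B : H →L[ℂ] H) (hAB : IsPyth A B)
    (ξ : H) (hξ : ‖ξ‖ = 1) (p : ℕ → Bool) (ℓ : ℝ) (hℓ : 0 < ℓ)
    (hlim : Tendsto (fun n : ℕ => ‖wordAct A B (pre p n) ξ‖) atTop (𝓝 ℓ)) :
    ∃ (η : H) (phat : ℕ → Bool), ‖η‖ = ℓ ∧
      ∀ n : ℕ, ‖wordAct A B (pre phat n) η‖ = ‖η‖ :=
  stmt7_general A B hAB ξ p ℓ hlim
end

section
/- Let (A, B, H) be a finite-dimensional P-module and define H_atom to be the span of all vectors contained in some periodic ray, and H_diff the set of vectors annihilated by all rays. Then H_atom ∩ H_diff = {0}, and both are A,B-invariant subspaces. -/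
open Filter Topology
open scoped InnerProductSpace

/-- Vectors contained in some periodic ray. -/
noncomputable def atomSet {H : Type*} [NormedAddCommGroup H] [InnerProductSpace ℂ H]
    (A B : H →L[ℂ] H) : Set H :=
  {ξ : H | ∃ p : ℕ → Bool, (∃ d : ℕ, 0 < d ∧ ∀ n : ℕ, p (n + d) = p n) ∧
    ContainedIn A B p ξ}

/-- Vectors annihilated by all rays. -/
noncomputable def diffSet {H : Type*} [NormedAddCommGroup H] [InnerProductSpace ℂ H]
    (A B : H →L[ℂ] H) : Set H :=
  {ξ : H | ∀ q : ℕ → Bool,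
    Tendsto (fun n : ℕ => ‖wordAct A B (pre q n) ξ‖) atTop (𝓝 0)}

section Aux

variable {H : Type*} [NormedAddCommGroup H] [InnerProductSpace ℂ H]

/-- The word action as a continuous linear map. -/
noncomputable def wordCLM (A B : H →L[ℂ] H) : List Bool → (H →L[ℂ] H)
  | [] => ContinuousLinearMap.id ℂ H
  | b :: rest => (wordCLM A B rest).comp (if b then B else A)

lemma wordAct_eq_wordCLM (A B : H →L[ℂ] H) : ∀ (w : List Bool) (ξ : H),
    wordAct A B w ξ = wordCLM A B w ξ
  | [], ξ => rfl
  | b :: rest, ξ => by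
    simp only [wordAct, wordCLM, ContinuousLinearMap.comp_apply]
    exact wordAct_eq_wordCLM A B rest _

lemma pre_succ (p : ℕ → Bool) (n : ℕ) :
    pre p (n + 1) = p 0 :: pre (fun m => p (m + 1)) n := by
  simp [pre, List.ofFn_succ]

variable [CompleteSpace H] {A B : H →L[ℂ] H}

lemma pyth_apply (hAB : IsPyth A B) (ξ : H) : ‖A ξ‖ ^ 2 + ‖B ξ‖ ^ 2 = ‖ξ‖ ^ 2 := by
  have h : (ContinuousLinearMap.adjoint A) (A ξ) + (ContinuousLinearMap.adjoint B) (B ξ) = ξ := by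
    have := congrArg (fun T : H →L[ℂ] H => T ξ) hAB
    simpa using this
  have h2 := congrArg (fun v => ⟪v, ξ⟫_ℂ) h
  simp only [inner_add_left, ContinuousLinearMap.adjoint_inner_left] at h2
  rw [inner_self_eq_norm_sq_to_K, inner_self_eq_norm_sq_to_K, inner_self_eq_norm_sq_to_K] at h2
  exact_mod_cast h2

lemma normA_le (hAB : IsPyth A B) (ξ : H) : ‖A ξ‖ ≤ ‖ξ‖ := by
  have := pyth_apply hAB ξ
  nlinarith [norm_nonneg (A ξ), norm_nonneg (B ξ), norm_nonneg ξ]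

lemma normB_le (hAB : IsPyth A B) (ξ : H) : ‖B ξ‖ ≤ ‖ξ‖ := by
  have := pyth_apply hAB ξ
  nlinarith [norm_nonneg (A ξ), norm_nonneg (B ξ), norm_nonneg ξ]

lemma wordCLM_contraction (hAB : IsPyth A B) : ∀ (w : List Bool) (ξ : H),
    ‖wordCLM A B w ξ‖ ≤ ‖ξ‖
  | [], ξ => le_of_eq rfl
  | b :: rest, ξ => by
    refine le_trans (wordCLM_contraction hAB rest _) ?_
    cases b
    · simpa using normA_le hAB ξ
    · simpa using normB_le hAB ξ

/-- A contraction preserves inner products against vectors whose norm it preserves. -/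
lemma inner_preserved {T : H →L[ℂ] H} (hT : ∀ ζ : H, ‖T ζ‖ ≤ ‖ζ‖) {η : H}
    (hη : ‖T η‖ = ‖η‖) (ζ : H) : ⟪T η, T ζ⟫_ℂ = ⟪η, ζ⟫_ℂ := by
  have hTnorm : ‖T‖ ≤ 1 := T.opNorm_le_bound zero_le_one (by simpa using hT)
  set C : H →L[ℂ] H := (ContinuousLinearMap.adjoint T).comp T with hC
  have hCinner : ∀ x y : H, ⟪C x, y⟫_ℂ = ⟪T x, T y⟫_ℂ := by
    intro x y
    simp [hC, ContinuousLinearMap.adjoint_inner_left]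
  have hCη : C η = η := by
    have h1 : ‖C η‖ ≤ ‖η‖ := by
      calc ‖C η‖ = ‖(ContinuousLinearMap.adjoint T) (T η)‖ := rfl
        _ ≤ ‖ContinuousLinearMap.adjoint T‖ * ‖T η‖ := (ContinuousLinearMap.adjoint T).le_opNorm _
        _ ≤ 1 * ‖η‖ := by
            rw [hη]
            refine mul_le_mul_of_nonneg_right ?_ (norm_nonneg η)
            rw [LinearIsometryEquiv.norm_map]
            exact hTnorm
        _ = ‖η‖ := one_mul _
    have h2 : RCLike.re ⟪C η, η⟫_ℂ = ‖η‖ ^ 2 := by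
      rw [hCinner, inner_self_eq_norm_sq_to_K, hη]
      simp [← Complex.ofReal_pow]
    have h3 : ‖C η - η‖ ^ 2 = ‖C η‖ ^ 2 - 2 * RCLike.re ⟪C η, η⟫_ℂ + ‖η‖ ^ 2 :=
      norm_sub_sq _ _
    have h4 : ‖C η - η‖ ^ 2 ≤ 0 := by
      rw [h3, h2]
      nlinarith [norm_nonneg (C η), norm_nonneg η]
    have h5 : ‖C η - η‖ = 0 := le_antisymm (by nlinarith [norm_nonneg (C η - η)]) (norm_nonneg _)
    rwa [norm_eq_zero, sub_eq_zero] at h5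
  rw [← hCinner, hCη]

end Aux

theorem stmt17 {H : Type*} [NormedAddCommGroup H] [InnerProductSpace ℂ H]
    [FiniteDimensional ℂ H] (A B : H →L[ℂ] H) (hAB : IsPyth A B) :
    (∀ ξ ∈ Submodule.span ℂ (atomSet A B),
        A ξ ∈ Submodule.span ℂ (atomSet A B) ∧ B ξ ∈ Submodule.span ℂ (atomSet A B)) ∧
    (∃ S : Submodule ℂ H, (S : Set H) = diffSet A B ∧ ∀ ξ ∈ S, A ξ ∈ S ∧ B ξ ∈ S) ∧
    (∀ ξ ∈ Submodule.span ℂ (atomSet A B), ξ ∈ diffSet A B → ξ = 0) := by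
  -- reformulate norms as wordCLM
  have hword : ∀ (w : List Bool) (ξ : H), wordAct A B w ξ = wordCLM A B w ξ :=
    wordAct_eq_wordCLM A B
  -- single step: if ξ is contained in p, A ξ and B ξ are in the span of atoms
  have step : ∀ (C : H →L[ℂ] H) (b : Bool), C = (if b then B else A) →
      ∀ ξ ∈ atomSet A B, C ξ ∈ Submodule.span ℂ (atomSet A B) := by
    intro C b hCb ξ ⟨p, ⟨d, hd, hper⟩, hne, hnorm⟩
    by_cases hb : p 0 = b
    · -- the ray starts with b, so C ξ is contained in the shifted ray
      apply Submodule.subset_span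
      refine ⟨fun m => p (m + 1), ⟨d, hd, fun n => by
        show p (n + d + 1) = p (n + 1)
        rw [show n + d + 1 = n + 1 + d by ring]
        exact hper (n + 1)⟩, ?_, ?_⟩
      · -- nonzero: its norm equals ‖ξ‖ ≠ 0
        intro h0
        have h1 := hnorm 1
        rw [show pre p 1 = [p 0] by simp [pre], hb] at h1
        have : wordAct A B [b] ξ = C ξ := by cases b <;> simp [wordAct, hCb]
        rw [this, h0] at h1
        simp only [norm_zero] at h1
        exact hne (by rwa [eq_comm, norm_eq_zero] at h1)
      · intro n
        have h1 := hnorm (n + 1)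
        rw [pre_succ, hb] at h1
        have h2 : wordAct A B (b :: pre (fun m => p (m + 1)) n) ξ
            = wordAct A B (pre (fun m => p (m + 1)) n) (C ξ) := by
          cases b <;> simp [wordAct, hCb]
        rw [h2] at h1
        rw [h1]
        have h3 := hnorm 1
        rw [show pre p 1 = [p 0] by simp [pre], hb] at h3
        have : wordAct A B [b] ξ = C ξ := by cases b <;> simp [wordAct, hCb]
        rw [this] at h3
        exact h3.symm
    · -- the ray starts with the other letter, so C ξ = 0
      have h1 := hnorm 1
      rw [show pre p 1 = [p 0] by simp [pre]] at h1
      have hp0 : p 0 = !b := by cases b <;> cases h : p 0 <;> simp_all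
      have hD : wordAct A B [p 0] ξ = (if (!b) then B else A) ξ := by
        rw [hp0]; cases b <;> simp [wordAct]
      rw [hD] at h1
      have hCzero : ‖C ξ‖ = 0 := by
        have hp := pyth_apply hAB ξ
        cases b
        · simp only [Bool.not_false, Bool.false_eq_true, if_true, if_false] at h1 hCb
          rw [hCb]
          rw [h1] at hp
          have hsq : ‖A ξ‖ ^ 2 = 0 := by linarith
          exact (pow_eq_zero_iff (by norm_num : (2 : ℕ) ≠ 0)).mp hsq
        · simp only [Bool.not_true, Bool.false_eq_true, if_true, if_false] at h1 hCb
          rw [hCb]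
          rw [h1] at hp
          have hsq : ‖B ξ‖ ^ 2 = 0 := by linarith
          exact (pow_eq_zero_iff (by norm_num : (2 : ℕ) ≠ 0)).mp hsq
      rw [norm_eq_zero] at hCzero
      rw [hCzero]
      exact Submodule.zero_mem _
  have atomInv : ∀ ξ ∈ Submodule.span ℂ (atomSet A B),
      A ξ ∈ Submodule.span ℂ (atomSet A B) ∧ B ξ ∈ Submodule.span ℂ (atomSet A B) := by
    intro ξ hξ
    induction hξ using Submodule.span_induction with
    | mem x hx => exact ⟨step A false rfl x hx, step B true rfl x hx⟩
    | zero => simp [Submodule.zero_mem]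
    | add x y _ _ hx hy =>
        simp only [map_add]
        exact ⟨Submodule.add_mem _ hx.1 hy.1, Submodule.add_mem _ hx.2 hy.2⟩
    | smul c x _ hx =>
        simp only [map_smul]
        exact ⟨Submodule.smul_mem _ c hx.1, Submodule.smul_mem _ c hx.2⟩
  refine ⟨atomInv, ?_, ?_⟩
  · -- diffSet is an invariant submodule
    have hzero : (0 : H) ∈ diffSet A B := by
      intro q
      have h0 : (fun n => ‖wordAct A B (pre q n) (0 : H)‖) = fun _ => (0 : ℝ) :=
        funext fun n => by rw [hword]; simp
      rw [h0]
      exact tendsto_const_nhds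
    have hadd : ∀ {x y : H}, x ∈ diffSet A B → y ∈ diffSet A B → x + y ∈ diffSet A B := by
      intro x y hx hy q
      have hb : ∀ n, ‖wordAct A B (pre q n) (x + y)‖
          ≤ ‖wordAct A B (pre q n) x‖ + ‖wordAct A B (pre q n) y‖ := by
        intro n
        simp only [hword, map_add]
        exact norm_add_le _ _
      have hlim : Tendsto (fun n => ‖wordAct A B (pre q n) x‖ + ‖wordAct A B (pre q n) y‖)
          atTop (𝓝 0) := by simpa using (hx q).add (hy q)
      exact squeeze_zero (fun n => norm_nonneg _) hb hlim
    have hsmul : ∀ (c : ℂ) {x : H}, x ∈ diffSet A B → c • x ∈ diffSet A B := by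
      intro c x hx q
      have hb : ∀ n, ‖wordAct A B (pre q n) (c • x)‖ = ‖c‖ * ‖wordAct A B (pre q n) x‖ := by
        intro n
        simp only [hword, map_smul, norm_smul]
      have hlim : Tendsto (fun n => ‖c‖ * ‖wordAct A B (pre q n) x‖) atTop (𝓝 0) := by
        simpa using (hx q).const_mul ‖c‖
      exact hlim.congr (fun n => (hb n).symm)
    refine ⟨{ carrier := diffSet A B
              zero_mem' := hzero
              add_mem' := hadd
              smul_mem' := hsmul }, rfl, ?_⟩
    · rintro ξ hξ
      have inv : ∀ (C : H →L[ℂ] H) (b : Bool), C = (if b then B else A) → C ξ ∈ diffSet A B := by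
        intro C b hCb q
        set q' : ℕ → Bool := fun n => Nat.rec b (fun m _ => q m) n with hq'
        have hq'0 : q' 0 = b := rfl
        have hq's : ∀ m, q' (m + 1) = q m := fun m => rfl
        have key : ∀ n, wordAct A B (pre q' (n + 1)) ξ = wordAct A B (pre q n) (C ξ) := by
          intro n
          rw [pre_succ, hq'0]
          have : (fun m => q' (m + 1)) = q := funext hq's
          rw [this]
          cases b <;> simp [wordAct, hCb]
        have h1 : Tendsto (fun n => ‖wordAct A B (pre q' (n + 1)) ξ‖) atTop (𝓝 0) :=
          (hξ q').comp (tendsto_add_atTop_nat 1)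
        exact h1.congr (fun n => by rw [key n])
      exact ⟨inv A false rfl, inv B true rfl⟩
  · -- intersection is zero
    intro ξ hξ hdiff
    have key : ∀ η ∈ atomSet A B, ⟪η, ξ⟫_ℂ = 0 := by
      rintro η ⟨p, -, hne, hnorm⟩
      have hconst : ∀ n : ℕ, ⟪η, ξ⟫_ℂ
          = ⟪wordCLM A B (pre p n) η, wordCLM A B (pre p n) ξ⟫_ℂ := by
        intro n
        refine (inner_preserved (wordCLM_contraction hAB (pre p n)) ?_ ξ).symm
        rw [← hword]; exact hnorm n
      have hlim : Tendsto (fun n : ℕ => ⟪wordCLM A B (pre p n) η, wordCLM A B (pre p n) ξ⟫_ℂ)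
          atTop (𝓝 0) := by
        apply squeeze_zero_norm (a := fun n => ‖η‖ * ‖wordAct A B (pre p n) ξ‖)
        · intro n
          rw [hword]
          calc ‖⟪wordCLM A B (pre p n) η, wordCLM A B (pre p n) ξ⟫_ℂ‖
              ≤ ‖wordCLM A B (pre p n) η‖ * ‖wordCLM A B (pre p n) ξ‖ := norm_inner_le_norm _ _
            _ ≤ ‖η‖ * ‖wordCLM A B (pre p n) ξ‖ := by
                refine mul_le_mul_of_nonneg_right ?_ (norm_nonneg _)
                rw [← hword]
                exact le_of_eq (hnorm n)
        · simpa using (hdiff p).const_mul ‖η‖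
      have : Tendsto (fun _ : ℕ => ⟪η, ξ⟫_ℂ) atTop (𝓝 0) :=
        hlim.congr (fun n => (hconst n).symm)
      exact tendsto_nhds_unique tendsto_const_nhds this
    have all : ∀ ζ ∈ Submodule.span ℂ (atomSet A B), ⟪ζ, ξ⟫_ℂ = 0 := by
      intro ζ hζ
      induction hζ using Submodule.span_induction with
      | mem x hx => exact key x hx
      | zero => simp
      | add x y _ _ hx hy => rw [inner_add_left, hx, hy, add_zero]
      | smul c x _ hx => rw [inner_smul_left, hx, mul_zero]
    have := all ξ hξ
    rwa [inner_self_eq_zero] at this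
end
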